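/- Let m : ℂ → ℂ be a bounded holomorphic function on the right half-plane {z : Re z > 0}, continuous on the closure, and let Φ : ℝ → ℂ be an integrable function supported in [0, ∞) whose Fourier transform satisfies Φ̂(v) = m(iv) for all real v. Then for every λ > 0, ∫₀^∞ e^{-λu} Φ(u) du = m(λ). -/

import Mathlib

open MeasureTheory Complex Set Topology

/-!
The Laplace transform `F z = ∫₀^∞ e^{-zu} Φ(u) du` is bounded by `‖Φ‖₁` on the closed right
half-plane, holomorphic inside it and continuous up to the boundary, and on the imaginary axis it
is the Fourier transform of `Φ`, hence agrees with `m` there. The difference `F - m` is therefore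
a bounded holomorphic function on the half-plane vanishing on its boundary, and the
Phragmén–Lindelöf principle forces it to vanish identically.
-/

noncomputable def laplaceTransform (Φ : ℝ → ℂ) (z : ℂ) : ℂ :=
  ∫ u in Ioi (0 : ℝ), cexp (-z * u) * Φ u

theorem norm_cexp_neg_mul_ofReal (z : ℂ) (u : ℝ) :
    ‖cexp (-z * u)‖ = Real.exp (-(z.re * u)) := by
  rw [norm_exp, neg_mul, neg_re, re_mul_ofReal]

theorem norm_cexp_neg_mul_ofReal_le_one {z : ℂ} (hz : 0 ≤ z.re) {u : ℝ} (hu : 0 ≤ u) :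
    ‖cexp (-z * u)‖ ≤ 1 := by
  rw [norm_cexp_neg_mul_ofReal, Real.exp_le_one_iff, neg_nonpos]
  positivity

theorem mul_norm_cexp_neg_mul_ofReal_le_inv {z : ℂ} {ε : ℝ} (hε : 0 < ε) (hz : ε ≤ z.re)
    {u : ℝ} (hu : 0 ≤ u) : u * ‖cexp (-z * u)‖ ≤ ε⁻¹ := by
  have hdecay : ε * u * Real.exp (-(ε * u)) ≤ 1 :=
    (Real.mul_exp_neg_le_exp_neg_one _).trans (Real.exp_le_one_iff.2 (by norm_num))
  calc u * ‖cexp (-z * u)‖ ≤ u * Real.exp (-(ε * u)) := by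
        rw [norm_cexp_neg_mul_ofReal]
        gcongr
    _ = ε⁻¹ * (ε * u * Real.exp (-(ε * u))) := by field_simp
    _ ≤ ε⁻¹ := mul_le_of_le_one_right (by positivity) hdecay

section LaplaceTransform

variable {Φ : ℝ → ℂ}

theorem aestronglyMeasurable_laplace_integrand (hΦ : IntegrableOn Φ (Ioi 0)) (z : ℂ) :
    AEStronglyMeasurable (fun u : ℝ => cexp (-z * u) * Φ u) (volume.restrict (Ioi 0)) :=
  (by fun_prop : Continuous fun u : ℝ => cexp (-z * u)).aestronglyMeasurable.mul
    hΦ.aestronglyMeasurable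

theorem norm_laplace_integrand_le {z : ℂ} (hz : 0 ≤ z.re) :
    ∀ᵐ u : ℝ ∂(volume.restrict (Ioi (0 : ℝ))), ‖cexp (-z * u) * Φ u‖ ≤ ‖Φ u‖ := by
  refine ae_restrict_of_forall_mem measurableSet_Ioi fun u hu => ?_
  rw [norm_mul]
  exact mul_le_of_le_one_left (norm_nonneg _) (norm_cexp_neg_mul_ofReal_le_one hz (le_of_lt hu))

theorem integrableOn_laplace_integrand (hΦ : IntegrableOn Φ (Ioi 0)) {z : ℂ} (hz : 0 ≤ z.re) :
    IntegrableOn (fun u : ℝ => cexp (-z * u) * Φ u) (Ioi 0) :=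
  hΦ.norm.mono' (aestronglyMeasurable_laplace_integrand hΦ z) (norm_laplace_integrand_le hz)

theorem norm_laplaceTransform_le (hΦ : IntegrableOn Φ (Ioi 0)) {z : ℂ} (hz : 0 ≤ z.re) :
    ‖laplaceTransform Φ z‖ ≤ ∫ u in Ioi 0, ‖Φ u‖ :=
  norm_integral_le_of_norm_le hΦ.norm (norm_laplace_integrand_le hz)

theorem continuousOn_laplaceTransform (hΦ : IntegrableOn Φ (Ioi 0)) :
    ContinuousOn (laplaceTransform Φ) {z : ℂ | 0 ≤ z.re} :=
  continuousOn_of_dominated (fun z _ => aestronglyMeasurable_laplace_integrand hΦ z)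
    (fun _ hz => norm_laplace_integrand_le hz) hΦ.norm
    (ae_of_all _ fun _ => by fun_prop)

theorem differentiableOn_laplaceTransform (hΦ : IntegrableOn Φ (Ioi 0)) :
    DifferentiableOn ℂ (laplaceTransform Φ) {z : ℂ | 0 < z.re} := by
  intro z₀ hz₀
  set ε := z₀.re / 2
  have hε : 0 < ε := half_pos hz₀
  have hnhds : {z : ℂ | ε < z.re} ∈ 𝓝 z₀ :=
    (isOpen_lt continuous_const continuous_re).mem_nhds (show ε < z₀.re from half_lt_self hz₀)
  have hderiv : ∀ᵐ u : ℝ ∂(volume.restrict (Ioi 0)), ∀ z ∈ {z : ℂ | ε < z.re},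
      HasDerivAt (fun z : ℂ => cexp (-z * u) * Φ u) (cexp (-z * u) * (-u) * Φ u) z :=
    ae_of_all _ fun u z _ => by
      simpa using (((hasDerivAt_id z).neg.mul_const (u : ℂ)).cexp).mul_const (Φ u)
  have hderiv_le : ∀ᵐ u : ℝ ∂(volume.restrict (Ioi 0)), ∀ z ∈ {z : ℂ | ε < z.re},
      ‖cexp (-z * u) * (-u) * Φ u‖ ≤ ε⁻¹ * ‖Φ u‖ := by
    refine ae_restrict_of_forall_mem measurableSet_Ioi fun u hu z hz => ?_
    rw [norm_mul, norm_mul, norm_neg, norm_real, Real.norm_of_nonneg (le_of_lt hu), mul_comm _ u]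
    exact mul_le_mul_of_nonneg_right
      (mul_norm_cexp_neg_mul_ofReal_le_inv hε (le_of_lt hz) (le_of_lt hu)) (norm_nonneg _)
  have hderiv_meas : AEStronglyMeasurable (fun u : ℝ => cexp (-z₀ * u) * (-u) * Φ u)
      (volume.restrict (Ioi 0)) :=
    (by fun_prop : Continuous fun u : ℝ => cexp (-z₀ * u) * -(u : ℂ)).aestronglyMeasurable.mul
      hΦ.aestronglyMeasurable
  exact (hasDerivAt_integral_of_dominated_loc_of_deriv_le hnhds
    (Filter.Eventually.of_forall (aestronglyMeasurable_laplace_integrand hΦ))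
    (integrableOn_laplace_integrand hΦ hz₀.le) hderiv_meas hderiv_le (hΦ.norm.const_mul _)
    hderiv).2.differentiableAt.differentiableWithinAt

theorem diffContOnCl_laplaceTransform (hΦ : IntegrableOn Φ (Ioi 0)) :
    DiffContOnCl ℂ (laplaceTransform Φ) {z : ℂ | 0 < z.re} :=
  ⟨differentiableOn_laplaceTransform hΦ, by
    simpa only [closure_setOfPred_lt_re] using continuousOn_laplaceTransform hΦ⟩

theorem laplaceTransform_ofReal_mul_I (hsupp : ∀ t < 0, Φ t = 0) (x : ℝ) :
    laplaceTransform Φ (x * I) = ∫ u : ℝ, cexp (-(I * u * x)) * Φ u := by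
  rw [laplaceTransform, ← integral_Ici_eq_integral_Ioi,
    setIntegral_eq_integral_of_forall_compl_eq_zero fun u hu => by
      rw [hsupp u (not_le.1 hu), mul_zero]]
  congr with u
  ring_nf

end LaplaceTransform

theorem eqOn_right_half_plane_of_bounded {E : Type*} [NormedAddCommGroup E]
    [NormedSpace ℂ E] {f g : ℂ → E} {A B : ℝ}
    (hf : DiffContOnCl ℂ f {z : ℂ | 0 < z.re}) (hg : DiffContOnCl ℂ g {z : ℂ | 0 < z.re})
    (hfA : ∀ z : ℂ, 0 < z.re → ‖f z‖ ≤ A) (hgB : ∀ z : ℂ, 0 < z.re → ‖g z‖ ≤ B)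
    (heq : ∀ x : ℝ, f (x * I) = g (x * I)) : EqOn f g {z : ℂ | 0 ≤ z.re} := by
  intro z hz
  have hbdd : ∀ z : ℂ, 0 < z.re → ‖(f - g) z‖ ≤ A + B := fun z hz =>
    (norm_sub_le _ _).trans (add_le_add (hfA z hz) (hgB z hz))
  rw [← sub_eq_zero, ← Pi.sub_apply, ← norm_le_zero_iff]
  refine PhragmenLindelof.right_half_plane_of_bounded_on_real (hf.sub hg) ⟨1, one_lt_two, 0, ?_⟩
    ?_ (fun x => by rw [Pi.sub_apply, heq, sub_self, norm_zero]) hz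
  · simp only [zero_mul, Real.exp_zero]
    exact (Asymptotics.isBigO_one_iff ℝ).2 <| Filter.isBoundedUnder_of_eventually_le <|
      Filter.eventually_inf_principal.2 <| Filter.Eventually.of_forall hbdd
  · refine Filter.isBoundedUnder_of_eventually_le (a := A + B) ?_
    filter_upwards [Filter.eventually_gt_atTop 0] with x hx
    exact hbdd x (by simpa using hx)

/-- If `m` is a bounded holomorphic function on the right half-plane,
continuous up to the boundary, and `Φ : ℝ → ℂ` is integrable, supported in `[0, ∞)`,
with Fourier transform `Φ̂(v) = ∫ e^{-iuv} Φ(u) du = m(iv)` for all real `v`, then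
for every `λ > 0` the Laplace transform of `Φ` at `λ` equals `m(λ)`. -/
theorem laplace_transform_recovers_multiplier
    (m : ℂ → ℂ) (B : ℝ)
    (hol : DifferentiableOn ℂ m {z : ℂ | 0 < z.re})
    (hbdd : ∀ z : ℂ, 0 < z.re → ‖m z‖ ≤ B)
    (hcont : ContinuousOn m {z : ℂ | 0 ≤ z.re})
    (Φ : ℝ → ℂ) (hΦint : Integrable Φ)
    (hsupp : ∀ t : ℝ, t < 0 → Φ t = 0)
    (hFT : ∀ v : ℝ, ∫ u : ℝ, Complex.exp (-(Complex.I * u * v)) * Φ u = m (Complex.I * v)) :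
    ∀ lam : ℝ, 0 < lam →
      ∫ u in Ioi (0 : ℝ), Complex.exp (-(lam : ℂ) * u) * Φ u = m lam := by
  intro lam hlam
  have hΦ : IntegrableOn Φ (Ioi 0) := hΦint.integrableOn
  have hm : DiffContOnCl ℂ m {z : ℂ | 0 < z.re} := ⟨hol, by rwa [closure_setOfPred_lt_re]⟩
  refine eqOn_right_half_plane_of_bounded (diffContOnCl_laplaceTransform hΦ) hm
    (fun z hz => norm_laplaceTransform_le hΦ hz.le) hbdd (fun x => ?_)
    (show 0 ≤ (lam : ℂ).re by simpa using hlam.le)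
  rw [laplaceTransform_ofReal_mul_I hsupp, hFT, mul_comm]
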